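/- (Switching principle II, first identity.) Let G = (V,E) be a finite simple graph with edge weights K : E → ℂ, let x_1, …, x_{2n} ∈ V be distinct vertices and ℓ_1*, …, ℓ_{2n}* ⊆ E be disorder edge sets satisfying the intersection-parity hypothesis. Then for every k ∈ {2, …, 2n}: W^{(2)}_{G,K}( ({x_1, x_k}, {ℓ_1*, ℓ_k*}), ({x_2, …, x_{2n}} ∖ {x_k}, {ℓ_2*, …, ℓ_{2n}*} ∖ {ℓ_k*}); x_1 ↔ x_k ) = (−1)^k · W^{(2)}_{G,K}( (∅, ∅), ({x_1, …, x_{2n}}, {ℓ_1*, …, ℓ_{2n}*}); x_1 ↔ x_k ). -/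

import Mathlib

open scoped Classical symmDiff
open Finset

/-- `ω` is a dimer cover (perfect matching) of the graph `G` depleted by the
monomer set `M`. -/
def IsDimerCover {V : Type*} (G : SimpleGraph V) (M : Finset V)
    (ω : Finset (Sym2 V)) : Prop :=
  (∀ e ∈ ω, e ∈ G.edgeSet) ∧
  (∀ v ∈ M, ∀ e ∈ ω, v ∉ e) ∧
  (∀ v : V, v ∉ M → ∃! e, e ∈ ω ∧ v ∈ e)

/-- The spanning subgraph of the overlay `ω₁ Δ ω₂`. -/
def symmGraph {V : Type*} [DecidableEq V] (ω₁ ω₂ : Finset (Sym2 V)) : SimpleGraph V :=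
  SimpleGraph.fromEdgeSet (↑(ω₁ ∆ ω₂) : Set (Sym2 V))

/-- The order–disorder double dimer amplitude `W²_{G,K}((M₁,𝓛₁),(M₂,𝓛₂); C)`:
`M₁, M₂` are monomer sets, `L₁, L₂ ⊆ ℕ` are the labels of the disorder edge sets
(`j ↦ ℓ j`) attached to the two replicas, and `C` is a list of pairs of vertices,
each required to lie in a common connected component of the overlay `ω₁ Δ ω₂`. -/
noncomputable def Wdouble {V : Type*} [Fintype V] [DecidableEq V]
    (G : SimpleGraph V) (K : Sym2 V → ℂ) (ℓ : ℕ → Finset (Sym2 V))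
    (M₁ : Finset V) (L₁ : Finset ℕ) (M₂ : Finset V) (L₂ : Finset ℕ)
    (C : List (V × V)) : ℂ :=
  ∑ p ∈ Finset.univ.filter (fun p : Finset (Sym2 V) × Finset (Sym2 V) =>
      IsDimerCover G M₁ p.1 ∧ IsDimerCover G M₂ p.2 ∧
      ∀ c ∈ C, (symmGraph p.1 p.2).Reachable c.1 c.2),
    ((∏ b ∈ p.1, K b) * (-1 : ℂ) ^ (∑ j ∈ L₁, (p.1 ∩ ℓ j).card)) *
      ((∏ b ∈ p.2, K b) * (-1 : ℂ) ^ (∑ j ∈ L₂, (p.2 ∩ ℓ j).card))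

/-!
Flipping both replicas along the overlay component `γ` of `x 1`, `(ω₁, ω₂) ↦ (ω₁ ∆ γ, ω₂ ∆ γ)`,
is an involution that preserves the overlay and the product of the edge weights. In the overlay
of two dimer covers every vertex has degree at most two and every monomer degree at most one, so
the component of `x 1` is a path whose other end is the only other monomer it contains, `x k`;
flipping it moves both `x 1` and `x k` into the other replica's monomer set. The
intersection-parity hypothesis says precisely that the disorder signs change by `(-1)^k`.
-/

namespace Finset

theorem filter_not_union_filter_eq_symmDiff {α : Type*} [DecidableEq α]
    {s t u : Finset α} (p : α → Prop) [DecidablePred p] (hst : Disjoint s t) (hu : u ⊆ s ∪ t)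
    (hp : ∀ x ∈ s ∪ t, p x ↔ x ∈ u) : s.filter (¬ p ·) ∪ t.filter p = s ∆ u := by
  ext x
  have hxu := @hu x
  have hpx := hp x
  have hxst : x ∈ s → x ∉ t := fun h => Finset.disjoint_left.1 hst h
  simp only [mem_union, mem_filter, mem_symmDiff] at hxu hpx ⊢
  tauto

theorem prod_symmDiff_mul_prod_symmDiff {α β : Type*} [DecidableEq α] [CommMonoid β]
    (f : α → β) {s t u : Finset α} (hu : u ⊆ s ∆ t) :
    (∏ x ∈ s ∆ u, f x) * ∏ x ∈ t ∆ u, f x = (∏ x ∈ s, f x) * ∏ x ∈ t, f x := by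
  have hsplit : ∀ {s t : Finset α}, u ⊆ s ∆ t →
      ∏ x ∈ s ∆ u, f x = (∏ x ∈ s \ u, f x) * ∏ x ∈ t ∩ u, f x := fun {s t} hu => by
    have hset : s ∆ u = s \ u ∪ t ∩ u := by
      ext x
      have := @hu x
      simp only [mem_symmDiff, mem_union, mem_sdiff, mem_inter] at this ⊢
      tauto
    rw [hset, prod_union (disjoint_sdiff_self_left.mono_right inter_subset_right)]
  rw [hsplit hu, hsplit (symmDiff_comm s t ▸ hu), ← prod_inter_mul_prod_sdiff s u,
    ← prod_inter_mul_prod_sdiff t u]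
  ac_rfl

theorem neg_one_pow_card_symmDiff {R α : Type*} [Ring R] [DecidableEq α] (s t : Finset α) :
    (-1 : R) ^ #(s ∆ t) = (-1) ^ #s * (-1) ^ #t := by
  have hst := card_sdiff_add_card_inter s t
  have hts := card_sdiff_add_card_inter t s
  rw [inter_comm] at hts
  rw [symmDiff_def, sup_eq_union, card_union_of_disjoint disjoint_sdiff_sdiff, ← pow_add,
    neg_one_pow_eq_pow_mod_two, neg_one_pow_eq_pow_mod_two (#s + #t)]
  congr 1
  omega

theorem neg_one_pow_sum_card_symmDiff_inter {R ι α : Type*} [CommRing R] [DecidableEq α]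
    (L : Finset ι) (ℓ : ι → Finset α) (s t : Finset α) :
    (-1 : R) ^ (∑ j ∈ L, #(s ∆ t ∩ ℓ j)) =
      (-1) ^ (∑ j ∈ L, #(s ∩ ℓ j)) * (-1) ^ (∑ j ∈ L, #(t ∩ ℓ j)) := by
  simp only [← prod_pow_eq_pow_sum, ← prod_mul_distrib, ← neg_one_pow_card_symmDiff]
  congr! 2
  exact congrArg card (inf_symmDiff_distrib_right s t _)

end Finset

theorem signed_weight_eq_of_parity {R α : Type*} [CommRing R] [DecidableEq α] (K : α → R)
    (ℓ : ℕ → Finset α) {ω₁ ω₂ γ : Finset α} (hγ : γ ⊆ ω₁ ∆ ω₂) {L : Finset ℕ} {i k : ℕ}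
    (hi : i ∈ L) (hk : k ∈ L) (hik : i ≠ k) {ε : R}
    (hpar : (-1 : R) ^ (∑ j ∈ L, #(γ ∩ ℓ j)) *
      (-1) ^ (#(ω₁ ∩ ℓ i) + #(ω₁ ∩ ℓ k) + #(ω₂ ∩ ℓ i) + #(ω₂ ∩ ℓ k)) = ε) :
    ((∏ b ∈ ω₁, K b) * (-1) ^ (∑ j ∈ {i, k}, #(ω₁ ∩ ℓ j))) *
        ((∏ b ∈ ω₂, K b) * (-1) ^ (∑ j ∈ (L.erase i).erase k, #(ω₂ ∩ ℓ j))) =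
      ε * ((∏ b ∈ ω₁ ∆ γ, K b) *
        ((∏ b ∈ ω₂ ∆ γ, K b) * (-1) ^ (∑ j ∈ L, #(ω₂ ∆ γ ∩ ℓ j)))) := by
  have hsplit : ∑ j ∈ L, #(ω₂ ∩ ℓ j) =
      #(ω₂ ∩ ℓ i) + #(ω₂ ∩ ℓ k) + ∑ j ∈ (L.erase i).erase k, #(ω₂ ∩ ℓ j) := by
    rw [← add_sum_erase L _ hi, ← add_sum_erase _ _ (mem_erase.2 ⟨hik.symm, hk⟩), add_assoc]
  rw [← mul_assoc (∏ b ∈ ω₁ ∆ γ, K b), Finset.prod_symmDiff_mul_prod_symmDiff K hγ,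
    Finset.neg_one_pow_sum_card_symmDiff_inter, hsplit, sum_pair hik, ← hpar]
  simp only [pow_add]
  ring_nf
  simp

namespace SimpleGraph

variable {V : Type*} {H : SimpleGraph V}

theorem Walk.mem_support_of_reachable {a b u w : V} {P : H.Walk a b}
    (hP : ∀ v ∈ P.support, H.neighborSet v ⊆ P.toSubgraph.neighborSet v)
    (hr : H.Reachable u w) (hu : u ∈ P.support) : w ∈ P.support := by
  replace hr := (reachable_iff_reflTransGen u w).1 hr
  induction hr with
  | refl => exact hu
  | tail _ hadj ih =>
    rw [← Walk.mem_verts_toSubgraph]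
    exact P.toSubgraph.neighborSet_subset_verts _ (hP _ ih hadj)

theorem eq_or_eq_of_reachable_of_ncard_neighborSet_le_one [Finite V] {a b c : V}
    (hdeg : ∀ v, (H.neighborSet v).ncard ≤ 2) (ha : (H.neighborSet a).ncard ≤ 1)
    (hb : (H.neighborSet b).ncard ≤ 1) (hab : a ≠ b) (hr : H.Reachable a b)
    (hc : (H.neighborSet c).ncard ≤ 1) (hac : H.Reachable a c) : c = a ∨ c = b := by
  obtain ⟨P, hP⟩ := hr.exists_isPath
  have hnil : ¬ P.Nil := Walk.not_nil_of_ne hab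
  have hinternal : ∀ i, i ≠ 0 → i < P.length →
      (P.toSubgraph.neighborSet (P.getVert i)).ncard = 2 :=
    fun i hi hi' => hP.ncard_neighborSet_toSubgraph_internal_eq_two hi hi'
  have hle : ∀ v ∈ P.support,
      (H.neighborSet v).ncard ≤ (P.toSubgraph.neighborSet v).ncard := by
    intro v hv
    obtain ⟨i, rfl, hi⟩ := Walk.mem_support_iff_exists_getVert.1 hv
    rcases Nat.eq_zero_or_pos i with rfl | hi0
    · simpa [hP.neighborSet_toSubgraph_startpoint hnil] using ha
    rcases hi.eq_or_lt with rfl | hilen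
    · simpa [hP.neighborSet_toSubgraph_endpoint hnil] using hb
    · rw [hinternal i hi0.ne' hilen]; exact hdeg _
  have hcP : c ∈ P.support := P.mem_support_of_reachable
    (fun v hv => (Set.eq_of_subset_of_ncard_le (P.toSubgraph.neighborSet_subset v)
      (hle v hv)).ge) hac P.start_mem_support
  obtain ⟨i, rfl, hi⟩ := Walk.mem_support_iff_exists_getVert.1 hcP
  rcases Nat.eq_zero_or_pos i with rfl | hi0
  · exact Or.inl P.getVert_zero
  rcases hi.eq_or_lt with rfl | hilen
  · exact Or.inr P.getVert_length
  have := (hinternal i hi0.ne' hilen).symm.trans_le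
    ((Set.ncard_le_ncard (P.toSubgraph.neighborSet_subset _)).trans hc)
  omega

end SimpleGraph

section Overlay

variable {V : Type*} {G : SimpleGraph V} {M M₁ M₂ : Finset V} {ω ω₁ ω₂ : Finset (Sym2 V)}

theorem IsDimerCover.subsingleton_partners (h : IsDimerCover G M ω) (v : V) :
    {u | s(v, u) ∈ ω}.Subsingleton := by
  intro u hu w hw
  by_cases hv : v ∈ M
  · exact absurd (Sym2.mem_mk_left v u) (h.2.1 v hv _ hu)
  · obtain ⟨e, -, he⟩ := h.2.2 v hv
    exact Sym2.congr_right.1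
      ((he _ ⟨hu, Sym2.mem_mk_left v u⟩).trans (he _ ⟨hw, Sym2.mem_mk_left v w⟩).symm)

theorem IsDimerCover.partners_eq_empty (h : IsDimerCover G M ω) {v : V} (hv : v ∈ M) :
    {u | s(v, u) ∈ ω} = ∅ :=
  Set.eq_empty_of_forall_notMem fun u hu => h.2.1 v hv _ hu (Sym2.mem_mk_left v u)

theorem IsDimerCover.of_forall_locally (hE : ∀ e ∈ ω, e ∈ G.edgeSet)
    (hloc : ∀ v, ∃ M' ω', IsDimerCover G M' ω' ∧ (v ∈ M ↔ v ∈ M') ∧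
      ∀ e, v ∈ e → (e ∈ ω ↔ e ∈ ω')) :
    IsDimerCover G M ω := by
  refine ⟨hE, fun v hv e he hve => ?_, fun v hv => ?_⟩
  · obtain ⟨M', ω', h', hM, hω⟩ := hloc v
    exact h'.2.1 v (hM.1 hv) e ((hω e hve).1 he) hve
  · obtain ⟨M', ω', h', hM, hω⟩ := hloc v
    obtain ⟨e, ⟨he, hve⟩, huniq⟩ := h'.2.2 v (mt hM.2 hv)
    exact ⟨e, ⟨(hω e hve).2 he, hve⟩, fun f hf => huniq f ⟨(hω f hf.2).1 hf.1, hf.2⟩⟩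

variable [DecidableEq V]

theorem IsDimerCover.symmDiff_of_forall_mem_iff (h₁ : IsDimerCover G M₁ ω₁)
    (h₂ : IsDimerCover G M₂ ω₂) {γ : Finset (Sym2 V)} {S : Set V} (hγ : γ ⊆ ω₁ ∆ ω₂)
    (hS : ∀ e ∈ ω₁ ∆ ω₂, ∀ v ∈ e, e ∈ γ ↔ v ∈ S) :
    IsDimerCover G (M₁.filter (· ∉ S) ∪ M₂.filter (· ∈ S)) (ω₁ ∆ γ) := by
  have hγ₁₂ : ∀ e ∈ γ, e ∈ ω₁ ∨ e ∈ ω₂ := fun e he => by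
    rcases Finset.mem_symmDiff.1 (hγ he) with h | h <;> tauto
  refine IsDimerCover.of_forall_locally (fun e he => ?_) (fun v => ?_)
  · rcases Finset.mem_symmDiff.1 he with ⟨h, -⟩ | ⟨h, -⟩
    · exact h₁.1 e h
    · rcases hγ₁₂ e h with h | h
      exacts [h₁.1 e h, h₂.1 e h]
  by_cases hv : v ∈ S
  · refine ⟨M₂, ω₂, h₂, by simp [hv], fun e hve => ?_⟩
    have hin : e ∈ ω₁ ∆ ω₂ → e ∈ γ := fun he => (hS e he v hve).2 hv
    have hout : e ∈ γ → e ∈ ω₁ ∆ ω₂ := fun he => hγ he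
    simp only [Finset.mem_symmDiff] at hin hout ⊢
    tauto
  · refine ⟨M₁, ω₁, h₁, by simp [hv], fun e hve => ?_⟩
    have hout : e ∉ γ := fun he => hv ((hS e (hγ he) v hve).1 he)
    simp [Finset.mem_symmDiff, hout]

theorem symmGraph_adj {u v : V} :
    (symmGraph ω₁ ω₂).Adj u v ↔ s(u, v) ∈ ω₁ ∆ ω₂ ∧ u ≠ v := by
  simp only [symmGraph, SimpleGraph.fromEdgeSet_adj, Finset.mem_coe]

theorem reachable_symmGraph_of_mem {e : Sym2 V} (he : e ∈ ω₁ ∆ ω₂) {u v : V} (hu : u ∈ e)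
    (hv : v ∈ e) : (symmGraph ω₁ ω₂).Reachable u v := by
  by_cases huv : u = v
  · exact huv ▸ SimpleGraph.Reachable.refl u
  · have he' : s(u, v) ∈ ω₁ ∆ ω₂ := (Sym2.mem_and_mem_iff huv).1 ⟨hu, hv⟩ ▸ he
    exact (symmGraph_adj.2 ⟨he', huv⟩).reachable

theorem neighborSet_symmGraph_subset (v : V) :
    (symmGraph ω₁ ω₂).neighborSet v ⊆ {u | s(v, u) ∈ ω₁} ∪ {u | s(v, u) ∈ ω₂} := by
  intro u hu
  rcases Finset.mem_symmDiff.1 (symmGraph_adj.1 hu).1 with ⟨h, -⟩ | ⟨h, -⟩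
  exacts [Or.inl h, Or.inr h]

variable [Finite V]

theorem IsDimerCover.ncard_neighborSet_symmGraph_le_two (h₁ : IsDimerCover G M₁ ω₁)
    (h₂ : IsDimerCover G M₂ ω₂) (v : V) : ((symmGraph ω₁ ω₂).neighborSet v).ncard ≤ 2 :=
  calc ((symmGraph ω₁ ω₂).neighborSet v).ncard
      ≤ ({u | s(v, u) ∈ ω₁} ∪ {u | s(v, u) ∈ ω₂}).ncard :=
        Set.ncard_le_ncard (neighborSet_symmGraph_subset v)
    _ ≤ 1 + 1 := (Set.ncard_union_le _ _).trans (add_le_add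
        (Set.ncard_le_one_iff_subsingleton.2 (h₁.subsingleton_partners v))
        (Set.ncard_le_one_iff_subsingleton.2 (h₂.subsingleton_partners v)))

theorem IsDimerCover.ncard_neighborSet_symmGraph_le_one (h₁ : IsDimerCover G M₁ ω₁)
    (h₂ : IsDimerCover G M₂ ω₂) {v : V} (hv : v ∈ M₁ ∪ M₂) :
    ((symmGraph ω₁ ω₂).neighborSet v).ncard ≤ 1 := by
  have hsub := neighborSet_symmGraph_subset (ω₁ := ω₁) (ω₂ := ω₂) v
  rcases Finset.mem_union.1 hv with hv | hv
  · rw [h₁.partners_eq_empty hv, Set.empty_union] at hsub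
    exact (Set.ncard_le_ncard hsub).trans
      (Set.ncard_le_one_iff_subsingleton.2 (h₂.subsingleton_partners v))
  · rw [h₂.partners_eq_empty hv, Set.union_empty] at hsub
    exact (Set.ncard_le_ncard hsub).trans
      (Set.ncard_le_one_iff_subsingleton.2 (h₁.subsingleton_partners v))

theorem IsDimerCover.eq_or_eq_of_reachable_symmGraph (h₁ : IsDimerCover G M₁ ω₁)
    (h₂ : IsDimerCover G M₂ ω₂) {a b c : V} (ha : a ∈ M₁ ∪ M₂) (hb : b ∈ M₁ ∪ M₂)
    (hc : c ∈ M₁ ∪ M₂) (hab : a ≠ b) (hr : (symmGraph ω₁ ω₂).Reachable a b)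
    (hac : (symmGraph ω₁ ω₂).Reachable a c) : c = a ∨ c = b :=
  SimpleGraph.eq_or_eq_of_reachable_of_ncard_neighborSet_le_one
    (h₁.ncard_neighborSet_symmGraph_le_two h₂) (h₁.ncard_neighborSet_symmGraph_le_one h₂ ha)
    (h₁.ncard_neighborSet_symmGraph_le_one h₂ hb) hab hr
    (h₁.ncard_neighborSet_symmGraph_le_one h₂ hc) hac

end Overlay

section Switch

variable {V : Type*} [DecidableEq V] {G : SimpleGraph V} {M₁ M₂ : Finset V}
  {ω₁ ω₂ : Finset (Sym2 V)} {a : V}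

noncomputable def overlayComponent (ω₁ ω₂ : Finset (Sym2 V)) (a : V) : Finset (Sym2 V) :=
  (ω₁ ∆ ω₂).filter (fun e => ∃ u, u ∈ e ∧ (symmGraph ω₁ ω₂).Reachable a u)

theorem overlayComponent_subset : overlayComponent ω₁ ω₂ a ⊆ ω₁ ∆ ω₂ := filter_subset _ _

theorem mem_overlayComponent_iff {e : Sym2 V} (he : e ∈ ω₁ ∆ ω₂) {v : V} (hv : v ∈ e) :
    e ∈ overlayComponent ω₁ ω₂ a ↔ (symmGraph ω₁ ω₂).Reachable a v := by
  refine ⟨fun h => ?_, fun h => mem_filter.2 ⟨he, v, hv, h⟩⟩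
  obtain ⟨-, u, hu, hau⟩ := mem_filter.1 h
  exact hau.trans (reachable_symmGraph_of_mem he hu hv)

noncomputable def switch (a : V) (p : Finset (Sym2 V) × Finset (Sym2 V)) :
    Finset (Sym2 V) × Finset (Sym2 V) :=
  (p.1 ∆ overlayComponent p.1 p.2 a, p.2 ∆ overlayComponent p.1 p.2 a)

theorem switch_fst_symmDiff_snd (a : V) (p : Finset (Sym2 V) × Finset (Sym2 V)) :
    (switch a p).1 ∆ (switch a p).2 = p.1 ∆ p.2 := by
  rw [switch, symmDiff_symmDiff_symmDiff_comm, symmDiff_self, symmDiff_bot]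

theorem symmGraph_switch (a : V) (p : Finset (Sym2 V) × Finset (Sym2 V)) :
    symmGraph (switch a p).1 (switch a p).2 = symmGraph p.1 p.2 := by
  rw [symmGraph, switch_fst_symmDiff_snd, symmGraph]

theorem switch_switch (a : V) (p : Finset (Sym2 V) × Finset (Sym2 V)) :
    switch a (switch a p) = p := by
  have hγ : overlayComponent (switch a p).1 (switch a p).2 a = overlayComponent p.1 p.2 a := by
    rw [overlayComponent, symmGraph_switch, switch_fst_symmDiff_snd, overlayComponent]
  rw [switch, hγ]
  simp only [switch, symmDiff_symmDiff_cancel_right]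

theorem IsDimerCover.switch [Finite V] {p : Finset (Sym2 V) × Finset (Sym2 V)}
    (h₁ : IsDimerCover G M₁ p.1) (h₂ : IsDimerCover G M₂ p.2) (hM : Disjoint M₁ M₂) {b : V}
    (ha : a ∈ M₁ ∪ M₂) (hb : b ∈ M₁ ∪ M₂) (hab : a ≠ b)
    (hr : (symmGraph p.1 p.2).Reachable a b) :
    IsDimerCover G (M₁ ∆ {a, b}) (switch a p).1 ∧ IsDimerCover G (M₂ ∆ {a, b}) (switch a p).2 := by
  let S : Set V := {v | (symmGraph p.1 p.2).Reachable a v}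
  have hS : ∀ e ∈ p.1 ∆ p.2, ∀ v ∈ e, e ∈ overlayComponent p.1 p.2 a ↔ v ∈ S :=
    fun e he v hv => mem_overlayComponent_iff he hv
  have hab_sub : {a, b} ⊆ M₁ ∪ M₂ := insert_subset ha (singleton_subset_iff.2 hb)
  have hcomp : ∀ c ∈ M₁ ∪ M₂, c ∈ S ↔ c ∈ ({a, b} : Finset V) := fun c hc => by
    rw [mem_insert, mem_singleton]
    refine ⟨h₁.eq_or_eq_of_reachable_symmGraph h₂ ha hb hc hab hr, ?_⟩
    rintro (rfl | rfl)
    exacts [SimpleGraph.Reachable.refl _, hr]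
  constructor
  · have h := h₁.symmDiff_of_forall_mem_iff h₂ overlayComponent_subset hS
    rwa [filter_not_union_filter_eq_symmDiff (· ∈ S) hM hab_sub hcomp] at h
  · have h := h₂.symmDiff_of_forall_mem_iff h₁ (γ := overlayComponent p.1 p.2 a) (S := S)
      (by rw [symmDiff_comm]; exact overlayComponent_subset) (by rw [symmDiff_comm]; exact hS)
    rwa [filter_not_union_filter_eq_symmDiff (· ∈ S) hM.symm (union_comm M₁ M₂ ▸ hab_sub)
      (union_comm M₁ M₂ ▸ hcomp)] at h

-- Stated under `Fintype V` so that the `Decidable` instance of the filter is the one found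
-- in the statement of the theorem.
theorem overlayComponent_eq_filter [Fintype V] :
    overlayComponent ω₁ ω₂ a =
      (ω₁ ∆ ω₂).filter (fun e => ∃ u, u ∈ e ∧ (symmGraph ω₁ ω₂).Reachable a u) := by
  unfold overlayComponent
  congr

theorem switch_mem_filter [Fintype V] (hM : Disjoint M₁ M₂) {b : V} (ha : a ∈ M₁ ∪ M₂)
    (hb : b ∈ M₁ ∪ M₂) (hab : a ≠ b) {p : Finset (Sym2 V) × Finset (Sym2 V)}
    (hp : p ∈ univ.filter (fun p : Finset (Sym2 V) × Finset (Sym2 V) =>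
      IsDimerCover G M₁ p.1 ∧ IsDimerCover G M₂ p.2 ∧
        ∀ c ∈ [(a, b)], (symmGraph p.1 p.2).Reachable c.1 c.2)) :
    switch a p ∈ univ.filter (fun p : Finset (Sym2 V) × Finset (Sym2 V) =>
      IsDimerCover G (M₁ ∆ {a, b}) p.1 ∧ IsDimerCover G (M₂ ∆ {a, b}) p.2 ∧
        ∀ c ∈ [(a, b)], (symmGraph p.1 p.2).Reachable c.1 c.2) := by
  simp only [mem_filter, mem_univ, true_and, List.mem_singleton, forall_eq] at hp ⊢
  obtain ⟨h₁, h₂, hr⟩ := hp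
  rw [symmGraph_switch]
  exact ⟨(h₁.switch h₂ hM ha hb hab hr).1, (h₁.switch h₂ hM ha hb hab hr).2, hr⟩

end Switch

theorem switching_principle_II_first_general {V : Type*} [Fintype V] [DecidableEq V]
    (G : SimpleGraph V) (K : Sym2 V → ℂ) (n : ℕ)
    (x : ℕ → V) (ℓ : ℕ → Finset (Sym2 V))
    (hinj : ∀ i ∈ Finset.Icc 1 (2 * n), ∀ j ∈ Finset.Icc 1 (2 * n), x i = x j → i = j)
    -- intersection-parity hypothesis: for every component `γ` of an overlay
    -- joining the monomers `x k` and `x l`, the parity of the intersection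
    -- numbers with the disorder lines is `(-1)^(k-l-1)`
    (hpar : ∀ M₁ M₂ : Finset V, Disjoint M₁ M₂ →
      M₁ ∪ M₂ = (Finset.Icc 1 (2 * n)).image x →
      ∀ ω₁ ω₂ : Finset (Sym2 V), IsDimerCover G M₁ ω₁ → IsDimerCover G M₂ ω₂ →
      ∀ k ∈ Finset.Icc 1 (2 * n), ∀ l ∈ Finset.Icc 1 (2 * n), k ≠ l →
        (symmGraph ω₁ ω₂).Reachable (x k) (x l) →
        (-1 : ℂ) ^ (∑ j ∈ Finset.Icc 1 (2 * n),
            ((((ω₁ ∆ ω₂).filter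
                (fun e => ∃ u, u ∈ e ∧ (symmGraph ω₁ ω₂).Reachable (x k) u)) ∩ ℓ j).card)) *
          (-1 : ℂ) ^ ((ω₁ ∩ ℓ k).card + (ω₁ ∩ ℓ l).card +
            (ω₂ ∩ ℓ k).card + (ω₂ ∩ ℓ l).card) =
          (-1 : ℂ) ^ ((k : ℤ) - (l : ℤ) - 1))
    (k : ℕ) (hk : k ∈ Finset.Icc 2 (2 * n)) :
    Wdouble G K ℓ {x 1, x k} {1, k}
        (((Finset.Icc 1 (2 * n)).image x) \ {x 1, x k}) ((Finset.Icc 2 (2 * n)).erase k)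
        [(x 1, x k)] =
      (-1 : ℂ) ^ k *
        Wdouble G K ℓ ∅ ∅ ((Finset.Icc 1 (2 * n)).image x) (Finset.Icc 1 (2 * n))
          [(x 1, x k)] := by
  set X := (Icc 1 (2 * n)).image x
  obtain ⟨hk2, hkn⟩ := mem_Icc.1 hk
  have h1 : 1 ∈ Icc 1 (2 * n) := mem_Icc.2 ⟨le_rfl, by omega⟩
  have hk' : k ∈ Icc 1 (2 * n) := mem_Icc.2 ⟨by omega, hkn⟩
  have hk1 : 1 ≠ k := by omega
  have hx : x 1 ≠ x k := fun h => hk1 (hinj 1 h1 k hk' h)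
  have hP : {x 1, x k} ⊆ X := insert_subset (mem_image_of_mem x h1)
    (singleton_subset_iff.2 (mem_image_of_mem x hk'))
  have hLdisj : Disjoint {x 1, x k} (X \ {x 1, x k}) := disjoint_sdiff
  have hLunion : {x 1, x k} ∪ (X \ {x 1, x k}) = X := union_sdiff_of_subset hP
  unfold Wdouble
  rw [mul_sum]
  refine sum_nbij' (switch (x 1)) (switch (x 1)) (fun p hp => ?_) (fun p hp => ?_)
    (fun p _ => switch_switch _ p) (fun p _ => switch_switch _ p) (fun p hp => ?_)
  · have h := switch_mem_filter hLdisj (by rw [hLunion]; exact hP (by simp))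
      (by rw [hLunion]; exact hP (by simp)) hx hp
    rwa [symmDiff_self, disjoint_sdiff_self_left.symmDiff_eq_sup, sup_eq_union,
      sdiff_union_of_subset hP] at h
  · have h := switch_mem_filter (disjoint_empty_left X) (by simpa using hP (by simp))
      (by simpa using hP (by simp)) hx hp
    rwa [← bot_eq_empty, bot_symmDiff, symmDiff_of_ge hP] at h
  · simp only [mem_filter, mem_univ, true_and, List.mem_singleton, forall_eq] at hp
    obtain ⟨h₁, h₂, hr⟩ := hp
    have hsign := hpar _ _ hLdisj hLunion p.1 p.2 h₁ h₂ 1 h1 k hk' hk1 hr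
    rw [← overlayComponent_eq_filter, Nat.cast_one, sub_sub_cancel_left, zpow_neg, zpow_natCast,
      ← inv_pow, inv_neg_one] at hsign
    have hIcc : (Icc 1 (2 * n)).erase 1 = Icc 2 (2 * n) := by rw [Icc_erase_left]; rfl
    rw [sum_empty, pow_zero, mul_one, ← hIcc]
    exact signed_weight_eq_of_parity K ℓ overlayComponent_subset h1 hk' hk1 hsign

/-- Switching principle II, first identity. -/
theorem switching_principle_II_first {V : Type*} [Fintype V] [DecidableEq V]
    (G : SimpleGraph V) (K : Sym2 V → ℂ) (n : ℕ) (hn : 1 ≤ n)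
    (x : ℕ → V) (ℓ : ℕ → Finset (Sym2 V))
    (hinj : ∀ i ∈ Finset.Icc 1 (2 * n), ∀ j ∈ Finset.Icc 1 (2 * n), x i = x j → i = j)
    (hℓ : ∀ j ∈ Finset.Icc 1 (2 * n), ↑(ℓ j) ⊆ G.edgeSet)
    -- intersection-parity hypothesis: for every component `γ` of an overlay
    -- joining the monomers `x k` and `x l`, the parity of the intersection
    -- numbers with the disorder lines is `(-1)^(k-l-1)`
    (hpar : ∀ M₁ M₂ : Finset V, Disjoint M₁ M₂ →
      M₁ ∪ M₂ = (Finset.Icc 1 (2 * n)).image x →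
      ∀ ω₁ ω₂ : Finset (Sym2 V), IsDimerCover G M₁ ω₁ → IsDimerCover G M₂ ω₂ →
      ∀ k ∈ Finset.Icc 1 (2 * n), ∀ l ∈ Finset.Icc 1 (2 * n), k ≠ l →
        (symmGraph ω₁ ω₂).Reachable (x k) (x l) →
        (-1 : ℂ) ^ (∑ j ∈ Finset.Icc 1 (2 * n),
            ((((ω₁ ∆ ω₂).filter
                (fun e => ∃ u, u ∈ e ∧ (symmGraph ω₁ ω₂).Reachable (x k) u)) ∩ ℓ j).card)) *
          (-1 : ℂ) ^ ((ω₁ ∩ ℓ k).card + (ω₁ ∩ ℓ l).card +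
            (ω₂ ∩ ℓ k).card + (ω₂ ∩ ℓ l).card) =
          (-1 : ℂ) ^ ((k : ℤ) - (l : ℤ) - 1))
    (k : ℕ) (hk : k ∈ Finset.Icc 2 (2 * n)) :
    Wdouble G K ℓ {x 1, x k} {1, k}
        (((Finset.Icc 1 (2 * n)).image x) \ {x 1, x k}) ((Finset.Icc 2 (2 * n)).erase k)
        [(x 1, x k)] =
      (-1 : ℂ) ^ k *
        Wdouble G K ℓ ∅ ∅ ((Finset.Icc 1 (2 * n)).image x) (Finset.Icc 1 (2 * n))
          [(x 1, x k)] :=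
  switching_principle_II_first_general G K n x ℓ hinj hpar k hk
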